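/- arXiv:2309.06144 — 3 statements merged into one kernel-verified Lean document; each statement's English description precedes it below -/
import Mathlib

section
/- Let G be a virtually abelian group with a finite-index normal abelian subgroup H, and let U be a set of coset representatives for H in G. Then for any g ∈ G written as g = hu with h ∈ H and u ∈ U, the conjugacy class of g satisfies [g] = ⋃_{v ∈ U} [H, vuv⁻¹] · (vgv⁻¹), where [H,x] = {[y,x] : y ∈ H}. -/
variable {G : Type*} [Group G]

/-- Word length of `g` over the alphabet `S ∪ S⁻¹`. -/
noncomputable def wordLength (S : Set G) (g : G) : ℕ :=
  sInf {n | ∃ w : List G, (∀ x ∈ w, x ∈ S ∨ x⁻¹ ∈ S) ∧ w.prod = g ∧ w.length = n}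

/-- Word metric on `G` relative to `S`. -/
noncomputable def wordDist (S : Set G) (x y : G) : ℕ := wordLength S (x⁻¹ * y)

/-- Growth function of a subset `U` of `G` relative to `S`. -/
noncomputable def growth (S : Set G) (U : Set G) (n : ℕ) : ℕ :=
  Set.ncard {g ∈ U | wordLength S g ≤ n}

/-- `f ≼ g` for growth functions. -/
def Dominates (f g : ℕ → ℕ) : Prop :=
  ∃ l : ℕ, 1 ≤ l ∧ ∀ n, f n ≤ l * g (l * n + l) + l

/-- Equivalence of growth functions. -/
def GrowthEquiv (f g : ℕ → ℕ) : Prop := Dominates f g ∧ Dominates g f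

/-- The conjugacy class of `g` in `G`. -/
def conjClass (g : G) : Set G := {x | ∃ y : G, x = y * g * y⁻¹}

open scoped commutatorElement

/-
Write an arbitrary conjugator as `k * v` with `k ∈ H` and `v ∈ U`. Then conjugating `g` by it
gives `⁅k, v g v⁻¹⁆ * (v g v⁻¹)`, and since `v g v⁻¹ = (v h v⁻¹)(v u v⁻¹)` with `v h v⁻¹ ∈ H`
and `H` abelian and normal, the factor `v h v⁻¹` drops out of the commutator.
-/

theorem commutatorElement_mul_self (k a : G) :
    ⁅k, a⁆ * a = k * a * k⁻¹ := by
  simp only [commutatorElement_def, inv_mul_cancel_right]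

theorem commutatorElement_mul_left_of_commute {k a : G} (b : G)
    (h : Commute a (b * k⁻¹ * b⁻¹)) : ⁅k, a * b⁆ = ⁅k, b⁆ := by
  calc ⁅k, a * b⁆ = k * (a * (b * k⁻¹ * b⁻¹)) * a⁻¹ := by
        simp only [commutatorElement_def]; group
    _ = ⁅k, b⁆ := by
        rw [h.eq]; simp only [commutatorElement_def]; group

section AbelianNormal

variable {H : Subgroup G} [H.Normal]

theorem commutatorElement_mul_left_of_mem (hab : ∀ x ∈ H, ∀ y ∈ H, x * y = y * x)
    {k a : G} (hk : k ∈ H) (ha : a ∈ H) (b : G) : ⁅k, a * b⁆ = ⁅k, b⁆ :=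
  commutatorElement_mul_left_of_commute b <|
    hab a ha _ (Subgroup.Normal.conj_mem ‹_› k⁻¹ (inv_mem hk) b)

theorem commutatorElement_conj_mul_conj (hab : ∀ x ∈ H, ∀ y ∈ H, x * y = y * x)
    {h k : G} (hh : h ∈ H) (hk : k ∈ H) (u v : G) :
    ⁅k, v * u * v⁻¹⁆ * (v * (h * u) * v⁻¹) = (k * v) * (h * u) * (k * v)⁻¹ := by
  have hconj : v * (h * u) * v⁻¹ = (v * h * v⁻¹) * (v * u * v⁻¹) := by group
  rw [hconj, ← commutatorElement_mul_left_of_mem hab hk (Subgroup.Normal.conj_mem ‹_› h hh v),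
    commutatorElement_mul_self, ← hconj]
  group

end AbelianNormal

theorem stmt_9_general {G : Type*} [Group G] (H : Subgroup G) [H.Normal]
    (hab : ∀ x ∈ H, ∀ y ∈ H, x * y = y * x)
    (U : Set G) (hU : ∀ g : G, ∃! u, u ∈ U ∧ g * u⁻¹ ∈ H)
    (g h u : G) (hh : h ∈ H) (hg : g = h * u) :
    conjClass g =
      ⋃ v ∈ U, (fun c => c * (v * g * v⁻¹)) '' {c : G | ∃ y ∈ H, c = ⁅y, v * u * v⁻¹⁆} := by
  subst hg
  ext x
  simp only [conjClass, Set.mem_ofPred_eq, Set.mem_iUnion, Set.mem_image]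
  constructor
  · rintro ⟨y, rfl⟩
    obtain ⟨v, ⟨hv, hyv⟩, -⟩ := hU y
    refine ⟨v, hv, _, ⟨y * v⁻¹, hyv, rfl⟩, ?_⟩
    rw [commutatorElement_conj_mul_conj hab hh hyv, inv_mul_cancel_right]
  · rintro ⟨v, -, _, ⟨y, hy, rfl⟩, rfl⟩
    exact ⟨y * v, commutatorElement_conj_mul_conj hab hh hy u v⟩

/-- in a virtually abelian group, a conjugacy class is a union of translated
commutator sets. -/
theorem stmt_9 {G : Type*} [Group G] (H : Subgroup G) [H.Normal] [H.FiniteIndex]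
    (hab : ∀ x ∈ H, ∀ y ∈ H, x * y = y * x)
    (U : Set G) (hU : ∀ g : G, ∃! u, u ∈ U ∧ g * u⁻¹ ∈ H)
    (g h u : G) (hh : h ∈ H) (hu : u ∈ U) (hg : g = h * u) :
    conjClass g =
      ⋃ v ∈ U, (fun c => c * (v * g * v⁻¹)) '' {c : G | ∃ y ∈ H, c = ⁅y, v * u * v⁻¹⁆} :=
  stmt_9_general H hab U hU g h u hh hg
end

section
/- The growth function of the free abelian group ℤ^r with respect to any finite generating set is equivalent to the polynomial n^r, for every positive integer r. -/
/-!
Word length is subadditive. Hence if every generator has coordinates bounded by `C`, the ball of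
radius `n` lies in the cube `[-Cn, Cn]^r`, so `β(n) ≤ (2Cn + 1)^r`. Conversely, writing
`g = ∑ gᵢ eᵢ` gives `ℓ(g) ≤ ∑ |gᵢ| ℓ(eᵢ)`, so the cube `[0, n - 1]^r`, which has `n^r` points,
lies in the ball of radius `n ∑ ℓ(eᵢ)`.
-/

/-- Word length over `S ∪ (-S)` in an additive group. -/
noncomputable def addWordLength {M : Type*} [AddGroup M] (S : Set M) (g : M) : ℕ :=
  sInf {n | ∃ w : List M, (∀ x ∈ w, x ∈ S ∨ -x ∈ S) ∧ w.sum = g ∧ w.length = n}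

section WordLength

variable {M : Type*} [AddGroup M] {S : Set M}

theorem addWordLength_le_length {w : List M} (hw : ∀ x ∈ w, x ∈ S ∨ -x ∈ S) :
    addWordLength S w.sum ≤ w.length :=
  Nat.sInf_le ⟨w, hw, rfl, rfl⟩

theorem exists_word_length_eq_addWordLength (hS : AddSubgroup.closure S = ⊤) (g : M) :
    ∃ w : List M, (∀ x ∈ w, x ∈ S ∨ -x ∈ S) ∧ w.sum = g ∧ w.length = addWordLength S g := by
  have hg : g ∈ (AddSubgroup.closure S).toAddSubmonoid := hS ▸ trivial
  rw [AddSubgroup.closure_toAddSubmonoid] at hg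
  obtain ⟨w, hw, rfl⟩ := AddSubmonoid.exists_list_of_mem_closure hg
  have hw' : ∀ x ∈ w, x ∈ S ∨ -x ∈ S := fun x hx => by simpa [or_comm] using hw x hx
  exact Nat.sInf_mem (s := {n | ∃ v : List M, (∀ x ∈ v, x ∈ S ∨ -x ∈ S) ∧ v.sum = w.sum ∧
    v.length = n}) ⟨w.length, w, hw', rfl, rfl⟩

theorem addWordLength_zero : addWordLength S 0 = 0 :=
  Nat.le_zero.mp (addWordLength_le_length (w := []) (by simp))

theorem addWordLength_add_le (hS : AddSubgroup.closure S = ⊤) (g h : M) :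
    addWordLength S (g + h) ≤ addWordLength S g + addWordLength S h := by
  obtain ⟨v, hv, rfl, hvl⟩ := exists_word_length_eq_addWordLength hS g
  obtain ⟨w, hw, rfl, hwl⟩ := exists_word_length_eq_addWordLength hS h
  rw [← hvl, ← hwl, ← List.length_append, ← List.sum_append]
  exact addWordLength_le_length fun x hx => (List.mem_append.mp hx).elim (hv x) (hw x)

theorem addWordLength_neg_le (hS : AddSubgroup.closure S = ⊤) (g : M) :
    addWordLength S (-g) ≤ addWordLength S g := by
  obtain ⟨w, hw, rfl, hwl⟩ := exists_word_length_eq_addWordLength hS g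
  rw [List.sum_neg_reverse, ← hwl, ← List.length_map (f := Neg.neg), ← List.length_reverse]
  refine addWordLength_le_length fun x hx => ?_
  obtain ⟨y, hy, rfl⟩ := List.mem_map.mp (List.mem_reverse.mp hx)
  simpa [or_comm] using hw y hy

theorem addWordLength_nsmul_le (hS : AddSubgroup.closure S = ⊤) (k : ℕ) (g : M) :
    addWordLength S (k • g) ≤ k * addWordLength S g := by
  induction k with
  | zero => simp [addWordLength_zero]
  | succ k ih =>
    rw [succ_nsmul, Nat.succ_mul]
    exact (addWordLength_add_le hS _ _).trans (Nat.add_le_add_right ih _)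

theorem addWordLength_zsmul_le (hS : AddSubgroup.closure S = ⊤) (k : ℤ) (g : M) :
    addWordLength S (k • g) ≤ k.natAbs * addWordLength S g := by
  rcases Int.natAbs_eq k with h | h <;> rw [h]
  · rw [natCast_zsmul]
    exact addWordLength_nsmul_le hS _ g
  · rw [neg_zsmul, natCast_zsmul, Int.natAbs_neg, Int.natAbs_natCast]
    exact (addWordLength_neg_le hS _).trans (addWordLength_nsmul_le hS _ g)

end WordLength

theorem addWordLength_sum_le {M ι : Type*} [AddCommGroup M] {S : Set M}
    (hS : AddSubgroup.closure S = ⊤) (s : Finset ι) (f : ι → M) :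
    addWordLength S (∑ i ∈ s, f i) ≤ ∑ i ∈ s, addWordLength S (f i) := by
  classical
  induction s using Finset.induction_on with
  | empty => simp [addWordLength_zero]
  | insert a s ha ih =>
    rw [Finset.sum_insert ha, Finset.sum_insert ha]
    exact (addWordLength_add_le hS _ _).trans (Nat.add_le_add_left ih _)

def wordBall {M : Type*} [AddGroup M] (S : Set M) (n : ℕ) : Set M :=
  {g | addWordLength S g ≤ n}

open Finset

theorem Pi.card_Icc_const_int {ι : Type*} [Fintype ι] [DecidableEq ι] (a b : ℤ) :
    #(Icc (fun _ : ι => a) (fun _ => b)) = (b + 1 - a).toNat ^ Fintype.card ι := by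
  simp [Pi.card_Icc, Int.card_Icc]

section IntLattice

variable {ι : Type*} {S : Set (ι → ℤ)} {C : ℕ}

theorem natAbs_sum_apply_le {w : List (ι → ℤ)} (hw : ∀ x ∈ w, ∀ i, (x i).natAbs ≤ C) (i : ι) :
    (w.sum i).natAbs ≤ w.length * C := by
  induction w with
  | nil => simp
  | cons x w ih =>
    rw [List.sum_cons, Pi.add_apply, List.length_cons, Nat.succ_mul, add_comm _ C]
    exact (Int.natAbs_add_le _ _).trans <|
      Nat.add_le_add (hw x List.mem_cons_self i) (ih fun y hy => hw y (List.mem_cons_of_mem x hy))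

theorem wordBall_subset_Icc (hS : AddSubgroup.closure S = ⊤)
    (hC : ∀ s ∈ S, ∀ i, (s i).natAbs ≤ C) (n : ℕ) :
    wordBall S n ⊆ Set.Icc (fun _ => -((C * n : ℕ) : ℤ)) (fun _ => ((C * n : ℕ) : ℤ)) := by
  intro g hg
  obtain ⟨w, hw, rfl, hwl⟩ := exists_word_length_eq_addWordLength hS g
  have hwC : ∀ x ∈ w, ∀ i, (x i).natAbs ≤ C := fun x hx i =>
    (hw x hx).elim (fun h => hC x h i) (fun h => by simpa using hC (-x) h i)
  have hbound (i : ι) : (w.sum i).natAbs ≤ C * n :=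
    (natAbs_sum_apply_le hwC i).trans (by rw [mul_comm, hwl]; exact Nat.mul_le_mul_left C hg)
  exact ⟨fun i => by have := hbound i; dsimp only; omega,
    fun i => by have := hbound i; dsimp only; omega⟩

variable [Fintype ι] [DecidableEq ι]

theorem ncard_wordBall_le (hS : AddSubgroup.closure S = ⊤)
    (hC : ∀ s ∈ S, ∀ i, (s i).natAbs ≤ C) (n : ℕ) :
    (wordBall S n).ncard ≤ (2 * C * n + 1) ^ Fintype.card ι := by
  have h := Set.ncard_le_ncard (wordBall_subset_Icc hS hC n) (Set.finite_Icc _ _)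
  rw [← coe_Icc, Set.ncard_coe_finset, Pi.card_Icc_const_int] at h
  convert h using 2
  rw [mul_assoc]
  omega

theorem addWordLength_le_sum_natAbs_mul (hS : AddSubgroup.closure S = ⊤) (g : ι → ℤ) :
    addWordLength S g ≤ ∑ i, (g i).natAbs * addWordLength S (Pi.single i 1) := by
  conv_lhs => rw [pi_eq_sum_univ' g]
  exact (addWordLength_sum_le hS _ _).trans <|
    sum_le_sum fun i _ => addWordLength_zsmul_le hS (g i) _

theorem pow_card_le_ncard_wordBall (hS : AddSubgroup.closure S = ⊤)
    (hC : ∀ s ∈ S, ∀ i, (s i).natAbs ≤ C) {n m : ℕ}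
    (hm : n * ∑ i, addWordLength S (Pi.single i 1) ≤ m) :
    n ^ Fintype.card ι ≤ (wordBall S m).ncard := by
  have hbox : ↑(Icc (fun _ => 0) (fun _ => (n : ℤ) - 1) : Finset (ι → ℤ)) ⊆ wordBall S m := by
    intro g hg
    simp only [coe_Icc, Set.mem_Icc, Pi.le_def] at hg
    have hgn (i : ι) : (g i).natAbs ≤ n := by have := hg.1 i; have := hg.2 i; omega
    refine (addWordLength_le_sum_natAbs_mul hS g).trans (le_trans ?_ hm)
    rw [mul_sum]
    exact sum_le_sum fun i _ => Nat.mul_le_mul_right _ (hgn i)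
  have h := Set.ncard_le_ncard hbox
    ((Set.finite_Icc _ _).subset (wordBall_subset_Icc hS hC m))
  rw [Set.ncard_coe_finset, Pi.card_Icc_const_int] at h
  convert h using 2
  omega

end IntLattice

theorem dominates_of_le_comp {f g : ℕ → ℕ} (l : ℕ) (hl : 1 ≤ l) (h : ∀ n, f n ≤ g (l * n + l)) :
    Dominates f g :=
  ⟨l, hl, fun n => (h n).trans (Nat.le_add_right_of_le (Nat.le_mul_of_pos_left _ hl))⟩

theorem stmt_11_general (r : ℕ) (S : Finset (Fin r → ℤ))
    (hS : AddSubgroup.closure (S : Set (Fin r → ℤ)) = ⊤) :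
    GrowthEquiv
      (fun n => Set.ncard {g : Fin r → ℤ | addWordLength (S : Set (Fin r → ℤ)) g ≤ n})
      (fun n => n ^ r) := by
  obtain ⟨C, hC⟩ : ∃ C : ℕ, ∀ s ∈ S, ∀ i, (s i).natAbs ≤ C :=
    ⟨S.sup fun s => univ.sup fun i => (s i).natAbs, fun s hs i =>
      (le_sup (f := fun i => (s i).natAbs) (mem_univ i)).trans
        (le_sup (f := fun s => univ.sup fun i => (s i).natAbs) hs)⟩
  set D := ∑ i, addWordLength (S : Set (Fin r → ℤ)) (Pi.single i 1)
  constructor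
  · refine dominates_of_le_comp (2 * C + 1) le_add_self fun n => ?_
    calc (wordBall (S : Set (Fin r → ℤ)) n).ncard ≤ (2 * C * n + 1) ^ r := by
          simpa only [Fintype.card_fin] using ncard_wordBall_le hS hC n
      _ ≤ ((2 * C + 1) * n + (2 * C + 1)) ^ r := Nat.pow_le_pow_left (by nlinarith) r
  · refine dominates_of_le_comp (D + 1) le_add_self fun n => ?_
    have h := pow_card_le_ncard_wordBall hS hC (m := (D + 1) * n + (D + 1))
      (by show n * D ≤ _; nlinarith)
    rwa [Fintype.card_fin] at h

/-- the growth function of `ℤ^r` is equivalent to `n^r`. -/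
theorem stmt_11 (r : ℕ) (hr : 0 < r) (S : Finset (Fin r → ℤ))
    (hS : AddSubgroup.closure (S : Set (Fin r → ℤ)) = ⊤) :
    GrowthEquiv
      (fun n => Set.ncard {g : Fin r → ℤ | addWordLength (S : Set (Fin r → ℤ)) g ≤ n})
      (fun n => n ^ r) :=
  stmt_11_general r S hS
end

section
/- For every d ∈ ℕ there exists a finitely generated virtually abelian group G such that for every natural number c ≤ d, G has a conjugacy class whose growth function in G is equivalent to n^c. Concretely, in G = ℤ^d ⋊ (C₂)^d, where the i-th copy of C₂ acts by negating the i-th coordinate of ℤ^d, the conjugacy class of the element s₁s₂⋯s_c (the product of the first c involutions) equals the coset ⟨t₁², …, t_c²⟩·s₁⋯s_c and has growth equivalent to n^c. -/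
variable {G : Type*} [Group G]

/-- The automorphism of `ℤ^d` (written multiplicatively) given by coordinatewise
multiplication by a vector of signs `s : (ℤˣ)^d`. -/
def signAut (d : ℕ) (s : Fin d → ℤˣ) :
    Multiplicative (Fin d → ℤ) ≃* Multiplicative (Fin d → ℤ) where
  toFun t := Multiplicative.ofAdd fun i => (s i : ℤ) * (Multiplicative.toAdd t) i
  invFun t := Multiplicative.ofAdd fun i => (s i : ℤ) * (Multiplicative.toAdd t) i
  left_inv t := by
    apply Multiplicative.toAdd.injective
    funext i
    simp [← mul_assoc, Int.units_mul_self]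
  right_inv t := by
    apply Multiplicative.toAdd.injective
    funext i
    simp [← mul_assoc, Int.units_mul_self]
  map_mul' t t' := by
    apply Multiplicative.toAdd.injective
    funext i
    simp [mul_add]

/-- The action of `(C₂)^d ≅ (ℤˣ)^d` on `ℤ^d` by coordinatewise sign changes. -/
def signAction (d : ℕ) : (Fin d → ℤˣ) →* MulAut (Multiplicative (Fin d → ℤ)) where
  toFun s := signAut d s
  map_one' := by
    ext t : 1
    apply Multiplicative.toAdd.injective
    funext i
    simp [signAut]
  map_mul' s s' := by
    ext t : 1
    apply Multiplicative.toAdd.injective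
    funext i
    simp [signAut, mul_assoc]

/-- The group `G = ℤ^d ⋊ (C₂)^d`, the i-th involution negating the i-th coordinate. -/
abbrev SdGroup (d : ℕ) := SemidirectProduct (Multiplicative (Fin d → ℤ)) (Fin d → ℤˣ)
  (signAction d)

/-!
Conjugating `s₁⋯s_c = (0, σ)` by `(v, τ)` gives `((1 - σ) v, σ)`, so its conjugacy class consists
of the elements `(2a, σ)` with `a` supported on the first `c` coordinates. For the standard
generators `tᵢ, sᵢ` every coordinate of an element is bounded by its word length, while `(v, σ)`
has word length at most `∑ |vᵢ| + d`; hence the class meets the ball of radius `n` in at most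
`(2n+1)^c` elements, while the ball of radius `(2d+1)(n+1)` contains the `n^c` elements `(2a, σ)`
with `1 ≤ aᵢ ≤ n`. Word lengths for two finite generating sets differ by a bounded factor, which
transfers both bounds to `S`.
-/

namespace Dominates

lemma of_le_comp {f g : ℕ → ℕ} {l : ℕ} (hl : 1 ≤ l) (h : ∀ n, f n ≤ g (l * n + l)) :
    Dominates f g :=
  ⟨l, hl, fun n => (h n).trans (Nat.le_add_right_of_le (Nat.le_mul_of_pos_left _ hl))⟩

end Dominates

section WordLength

variable {S : Set G}

lemma wordLength_list_prod_le_length (w : List G) (hw : ∀ x ∈ w, x ∈ S ∨ x⁻¹ ∈ S) :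
    wordLength S w.prod ≤ w.length :=
  Nat.sInf_le ⟨w, hw, rfl, rfl⟩

lemma exists_list_length_eq_wordLength (hS : Subgroup.closure S = ⊤) (g : G) :
    ∃ w : List G, (∀ x ∈ w, x ∈ S ∨ x⁻¹ ∈ S) ∧ w.prod = g ∧ w.length = wordLength S g := by
  have hg : g ∈ Submonoid.closure (S ∪ S⁻¹) := by
    rw [← Subgroup.closure_toSubmonoid, hS]; trivial
  obtain ⟨w, hw, hwg⟩ := Submonoid.exists_list_of_mem_closure hg
  exact Nat.sInf_mem (s := {n | ∃ w : List G, (∀ x ∈ w, x ∈ S ∨ x⁻¹ ∈ S) ∧ w.prod = g ∧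
    w.length = n}) ⟨w.length, w, hw, hwg, rfl⟩

lemma wordLength_one : wordLength S (1 : G) = 0 :=
  Nat.le_zero.mp (wordLength_list_prod_le_length [] (by simp))

lemma wordLength_mul_le (hS : Subgroup.closure S = ⊤) (g h : G) :
    wordLength S (g * h) ≤ wordLength S g + wordLength S h := by
  obtain ⟨v, hv, rfl, hvl⟩ := exists_list_length_eq_wordLength hS g
  obtain ⟨w, hw, rfl, hwl⟩ := exists_list_length_eq_wordLength hS h
  rw [← hvl, ← hwl, ← List.length_append, ← List.prod_append]
  exact wordLength_list_prod_le_length _ fun x hx => (List.mem_append.mp hx).elim (hv x) (hw x)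

lemma wordLength_inv (g : G) : wordLength S g⁻¹ = wordLength S g := by
  have key : ∀ (h : G) (n : ℕ),
      (∃ w : List G, (∀ x ∈ w, x ∈ S ∨ x⁻¹ ∈ S) ∧ w.prod = h ∧ w.length = n) →
      ∃ w : List G, (∀ x ∈ w, x ∈ S ∨ x⁻¹ ∈ S) ∧ w.prod = h⁻¹ ∧ w.length = n := by
    rintro h n ⟨w, hw, rfl, rfl⟩
    refine ⟨(w.map (·⁻¹)).reverse, fun x hx => ?_, List.prod_inv_reverse w ▸ rfl, by simp⟩
    simp only [List.mem_reverse, List.mem_map] at hx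
    obtain ⟨y, hy, rfl⟩ := hx
    simpa [or_comm] using hw y hy
  unfold wordLength
  congr 1
  ext n
  exact ⟨fun hn => inv_inv g ▸ key _ n hn, key g n⟩

lemma wordLength_zpow_le {x : G} (hx : x ∈ S) (k : ℤ) : wordLength S (x ^ k) ≤ k.natAbs := by
  rcases Int.natAbs_eq k with h | h
  · have := wordLength_list_prod_le_length (S := S) (List.replicate k.natAbs x)
      fun y hy => .inl (List.eq_of_mem_replicate hy ▸ hx)
    rwa [List.prod_replicate, List.length_replicate, ← zpow_natCast, ← h] at this
  · have := wordLength_list_prod_le_length (S := S) (List.replicate k.natAbs x⁻¹)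
      fun y hy => .inr (by rw [List.eq_of_mem_replicate hy, inv_inv]; exact hx)
    rwa [List.prod_replicate, List.length_replicate, inv_pow, ← zpow_natCast, ← zpow_neg,
      ← h] at this

lemma wordLength_map_prod_le (hS : Subgroup.closure S = ⊤) {M ι : Type*} [CommMonoid M]
    (φ : M →* G) (s : Finset ι) (f : ι → M) :
    wordLength S (φ (∏ i ∈ s, f i)) ≤ ∑ i ∈ s, wordLength S (φ (f i)) := by
  classical
  induction s using Finset.induction_on with
  | empty => simp [wordLength_one]
  | insert a s ha ih =>
    rw [Finset.prod_insert ha, map_mul, Finset.sum_insert ha]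
    exact (wordLength_mul_le hS _ _).trans (Nat.add_le_add_left ih _)

lemma le_mul_wordLength (hS : Subgroup.closure S = ⊤) {f : G → ℕ} (hf_one : f 1 = 0)
    (hf_mul : ∀ x y, f (x * y) ≤ f x + f y) (hf_inv : ∀ x, f x⁻¹ = f x) {K : ℕ}
    (hK : ∀ x ∈ S, f x ≤ K) (g : G) : f g ≤ K * wordLength S g := by
  obtain ⟨w, hw, rfl, hl⟩ := exists_list_length_eq_wordLength hS g
  rw [← hl]
  clear hl
  induction w with
  | nil => simp [hf_one]
  | cons x w ih =>
    have hx : f x ≤ K := (hw x List.mem_cons_self).elim (hK x) fun h => hf_inv x ▸ hK _ h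
    rw [List.prod_cons, List.length_cons, Nat.mul_succ]
    have := ih fun y hy => hw y (List.mem_cons_of_mem x hy)
    linarith [hf_mul x w.prod]

lemma finite_setOf_wordLength_le (hS_fin : S.Finite) (hS : Subgroup.closure S = ⊤) (n : ℕ) :
    {g | wordLength S g ≤ n}.Finite := by
  have : Finite ↥(S ∪ S⁻¹) := (hS_fin.union hS_fin.inv).to_subtype
  refine (Set.finite_iUnion fun k : Fin (n + 1) => Set.finite_range
    fun f : Fin k → ↥(S ∪ S⁻¹) => (List.ofFn fun i => (f i : G)).prod).subset ?_
  intro g hg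
  obtain ⟨w, hw, rfl, hl⟩ := exists_list_length_eq_wordLength hS g
  refine Set.mem_iUnion.2 ⟨⟨w.length, by rw [hl]; exact Nat.lt_succ_of_le hg⟩,
    fun i => ⟨w.get i, hw _ (List.get_mem w i)⟩, ?_⟩
  simp only [List.ofFn_get]

lemma exists_growth_le_growth_mul {T : Set G} (hS_fin : S.Finite) (hS : Subgroup.closure S = ⊤)
    (hT_fin : T.Finite) (hT : Subgroup.closure T = ⊤) :
    ∃ K, 1 ≤ K ∧ ∀ U n, growth S U n ≤ growth T U (K * n) := by
  obtain ⟨K, hK⟩ := (hS_fin.image (wordLength T)).bddAbove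
  have hKS : ∀ g, wordLength T g ≤ (K + 1) * wordLength S g :=
    le_mul_wordLength hS wordLength_one (wordLength_mul_le hT) wordLength_inv
      fun x hx => (hK ⟨x, hx, rfl⟩).trans K.le_succ
  refine ⟨K + 1, K.succ_pos, fun U n => Set.ncard_le_ncard ?_
    ((finite_setOf_wordLength_le hT_fin hT _).subset fun g hg => hg.2)⟩
  exact fun g ⟨hgU, hg⟩ => ⟨hgU, (hKS g).trans (Nat.mul_le_mul_left _ hg)⟩

end WordLength

namespace SdGroup

open SemidirectProduct Multiplicative Finset

variable {d : ℕ}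

lemma toAdd_signAction_apply (σ : Fin d → ℤˣ) (x : Multiplicative (Fin d → ℤ)) (i : Fin d) :
    toAdd (signAction d σ x) i = σ i * toAdd x i :=
  rfl

def t (i : Fin d) : SdGroup d := inl (ofAdd (Pi.single i 1))

def s (i : Fin d) : SdGroup d := inr (Pi.mulSingle i (-1))

def gens (d : ℕ) : Set (SdGroup d) := Set.range t ∪ Set.range s

lemma finite_gens : (gens d).Finite := (Set.finite_range t).union (Set.finite_range s)

lemma t_mem_gens (i : Fin d) : t i ∈ gens d := .inl ⟨i, rfl⟩

lemma s_mem_gens (i : Fin d) : s i ∈ gens d := .inr ⟨i, rfl⟩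

lemma inl_ofAdd_single (i : Fin d) (k : ℤ) :
    (inl (ofAdd (Pi.single i k)) : SdGroup d) = t i ^ k := by
  rw [t, ← map_zpow, ← ofAdd_zsmul, ← Pi.single_smul, smul_eq_mul, mul_one]

lemma inr_mulSingle_eq_one_or_eq_s (i : Fin d) (u : ℤˣ) :
    (inr (Pi.mulSingle i u) : SdGroup d) = 1 ∨ inr (Pi.mulSingle i u) = s i := by
  rcases Int.units_eq_one_or u with rfl | rfl <;> simp [s]

lemma inl_eq_prod (x : Multiplicative (Fin d → ℤ)) :
    (inl x : SdGroup d) = inl (∏ i, ofAdd (Pi.single i (toAdd x i))) := by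
  rw [← ofAdd_sum, Finset.univ_sum_single, ofAdd_toAdd]

lemma inr_eq_prod (σ : Fin d → ℤˣ) :
    (inr σ : SdGroup d) = inr (∏ i, Pi.mulSingle i (σ i)) := by
  rw [Finset.univ_prod_mulSingle]

lemma closure_gens : Subgroup.closure (gens d) = ⊤ := by
  refine eq_top_iff.2 fun g _ => ?_
  rw [← inl_left_mul_inr_right g, inl_eq_prod g.left, inr_eq_prod]
  refine mul_mem (Subgroup.mem_comap.1 (Subgroup.prod_mem (Subgroup.comap inl _) fun i _ => ?_))
    (Subgroup.mem_comap.1 (Subgroup.prod_mem (Subgroup.comap inr _) fun i _ => ?_))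
  · rw [Subgroup.mem_comap, inl_ofAdd_single]
    exact zpow_mem (Subgroup.subset_closure (t_mem_gens i)) _
  · rcases inr_mulSingle_eq_one_or_eq_s i (g.right i) with h | h <;> rw [Subgroup.mem_comap, h]
    · exact one_mem _
    · exact Subgroup.subset_closure (s_mem_gens i)

lemma wordLength_mk_le (v : Fin d → ℤ) (σ : Fin d → ℤˣ) :
    wordLength (gens d) (⟨ofAdd v, σ⟩ : SdGroup d) ≤ ∑ i, (v i).natAbs + d := by
  rw [← inl_left_mul_inr_right ⟨ofAdd v, σ⟩, inl_eq_prod, inr_eq_prod]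
  refine (wordLength_mul_le closure_gens _ _).trans (add_le_add ?_ ?_)
  · refine (wordLength_map_prod_le closure_gens _ _ _).trans (Finset.sum_le_sum fun i _ => ?_)
    rw [inl_ofAdd_single]
    exact wordLength_zpow_le (t_mem_gens i) _
  · refine (wordLength_map_prod_le closure_gens _ _ _).trans ?_
    refine (Finset.sum_le_card_nsmul _ _ 1 fun i _ => ?_).trans (by simp)
    rcases inr_mulSingle_eq_one_or_eq_s i (σ i) with h | h <;> rw [h]
    · simp [wordLength_one]
    · simpa using wordLength_zpow_le (s_mem_gens i) 1

lemma natAbs_left_mul_le (g h : SdGroup d) (i : Fin d) :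
    (toAdd (g * h).left i).natAbs ≤ (toAdd g.left i).natAbs + (toAdd h.left i).natAbs := by
  refine (Int.natAbs_add_le _ _).trans_eq ?_
  simp [toAdd_signAction_apply, Int.natAbs_mul]

lemma natAbs_left_inv (g : SdGroup d) (i : Fin d) :
    (toAdd g⁻¹.left i).natAbs = (toAdd g.left i).natAbs := by
  simp only [inv_left, toAdd_signAction_apply, toAdd_inv, Pi.neg_apply, Int.natAbs_mul,
    Int.units_natAbs, Int.natAbs_neg, one_mul]

lemma natAbs_left_le_wordLength (g : SdGroup d) (i : Fin d) :
    (toAdd g.left i).natAbs ≤ wordLength (gens d) g := by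
  refine (le_mul_wordLength (f := fun g => (toAdd g.left i).natAbs) closure_gens (by simp)
    (natAbs_left_mul_le · · i) (natAbs_left_inv · i) (K := 1) ?_ g).trans_eq (one_mul _)
  rintro x (⟨j, rfl⟩ | ⟨j, rfl⟩)
  · rcases eq_or_ne i j with rfl | h <;> simp [t, *]
  · simp [s]

def signFlip (d c : ℕ) : Fin d → ℤˣ := fun i => if (i : ℕ) < c then -1 else 1

lemma conj_mk_one (y : SdGroup d) (σ : Fin d → ℤˣ) :
    y * ⟨1, σ⟩ * y⁻¹ = ⟨ofAdd fun i => (1 - σ i) * toAdd y.left i, σ⟩ := by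
  refine SemidirectProduct.ext (toAdd.injective <| funext fun i => ?_) ?_
  · simp only [mul_left, inv_left, mul_right, map_one, mul_one, toAdd_mul, Pi.add_apply,
      toAdd_signAction_apply, toAdd_inv, toAdd_ofAdd, Pi.neg_apply, Pi.mul_apply, Pi.inv_apply,
      Units.val_mul]
    rcases Int.units_eq_one_or (y.right i) with h | h <;> simp [h] <;> ring
  · simp [mul_comm y.right σ]

lemma conjClass_signFlip (c : ℕ) :
    conjClass (⟨1, signFlip d c⟩ : SdGroup d) =
      {g : SdGroup d |
        (∀ i : Fin d, (i : ℕ) < c → (2 : ℤ) ∣ toAdd g.left i) ∧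
        (∀ i : Fin d, c ≤ (i : ℕ) → toAdd g.left i = 0) ∧
        g.right = signFlip d c} := by
  ext g
  constructor
  · rintro ⟨y, rfl⟩
    rw [conj_mk_one]
    refine ⟨fun i hi => ⟨toAdd y.left i, ?_⟩, fun i hi => ?_, rfl⟩
    · simp [signFlip, hi]
    · simp [signFlip, not_lt.2 hi]
  · rintro ⟨heven, hzero, hright⟩
    refine ⟨⟨ofAdd fun i => toAdd g.left i / 2, 1⟩, ?_⟩
    rw [conj_mk_one]
    refine SemidirectProduct.ext (toAdd.injective <| funext fun i => ?_) hright
    by_cases hi : (i : ℕ) < c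
    · simp only [signFlip, hi, toAdd_ofAdd, if_true, Units.val_neg, Units.val_one]
      have := heven i hi
      omega
    · simp [signFlip, hi, hzero i (not_lt.1 hi)]

lemma growth_conjClass_signFlip_le {c : ℕ} (hc : c ≤ d) (n : ℕ) :
    growth (gens d) (conjClass (⟨1, signFlip d c⟩ : SdGroup d)) n ≤ (2 * n + 1) ^ c := by
  have hcard : (Fintype.piFinset fun _ : Fin c => Icc (-(n : ℤ)) n).card = (2 * n + 1) ^ c := by
    rw [Fintype.card_piFinset, prod_const, Int.card_Icc, card_univ, Fintype.card_fin]
    congr 1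
    omega
  rw [growth, ← hcard, ← Set.ncard_coe_finset]
  refine Set.ncard_le_ncard_of_injOn (fun g j => toAdd g.left (Fin.castLE hc j)) ?_ ?_
    (Finset.finite_toSet _)
  · rintro g ⟨-, hg⟩
    simp only [mem_coe, Fintype.mem_piFinset, mem_Icc]
    intro j
    have := (natAbs_left_le_wordLength g (Fin.castLE hc j)).trans hg
    omega
  · rintro a ⟨ha, -⟩ b ⟨hb, -⟩ hab
    rw [conjClass_signFlip] at ha hb
    ext i
    · by_cases hi : (i : ℕ) < c
      · exact congrFun hab ⟨i, hi⟩
      · rw [ha.2.1 i (not_lt.1 hi), hb.2.1 i (not_lt.1 hi)]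
    · rw [ha.2.2, hb.2.2]

lemma pow_le_growth_conjClass_signFlip {c : ℕ} (hc : c ≤ d) (n : ℕ) :
    n ^ c ≤ growth (gens d) (conjClass (⟨1, signFlip d c⟩ : SdGroup d))
      ((2 * d + 1) * n + (2 * d + 1)) := by
  have hcard : (Fintype.piFinset fun _ : Fin c => Icc (1 : ℤ) n).card = n ^ c := by
    rw [Fintype.card_piFinset, prod_const, Int.card_Icc, card_univ, Fintype.card_fin]
    congr 1
    omega
  rw [growth, ← hcard, ← Set.ncard_coe_finset]
  refine Set.ncard_le_ncard_of_injOn (fun a : Fin c → ℤ => ⟨ofAdd fun i =>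
      if h : (i : ℕ) < c then 2 * a ⟨i, h⟩ else 0, signFlip d c⟩) ?_ ?_
    ((finite_setOf_wordLength_le finite_gens closure_gens _).subset fun g hg => hg.2)
  · intro a ha
    simp only [mem_coe, Fintype.mem_piFinset, mem_Icc] at ha
    refine ⟨?_, (wordLength_mk_le _ _).trans ?_⟩
    · rw [conjClass_signFlip]
      exact ⟨fun i hi => by simp [hi], fun i hi => by simp [not_lt.2 hi], rfl⟩
    · have hcoord : ∀ i ∈ (univ : Finset (Fin d)),
          (if h : (i : ℕ) < c then 2 * a ⟨i, h⟩ else 0).natAbs ≤ 2 * n := by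
        intro i _
        split_ifs with h
        · have := ha ⟨i, h⟩
          omega
        · simp
      have := sum_le_card_nsmul _ _ _ hcoord
      simp only [card_univ, Fintype.card_fin, smul_eq_mul] at this
      nlinarith
  · intro a _ b _ hab
    funext j
    have := congrFun (congrArg (fun g : SdGroup d => toAdd g.left) hab) (Fin.castLE hc j)
    simpa using this

end SdGroup

/-- in `G = ℤ^d ⋊ (C₂)^d`, for every `c ≤ d` the conjugacy class of
`s₁s₂⋯s_c` is the coset `⟨t₁²,…,t_c²⟩ s₁⋯s_c` and has growth equivalent to `n^c`. -/
theorem stmt_13 (d c : ℕ) (hc : c ≤ d)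
    (S : Finset (SdGroup d)) (hS : Subgroup.closure (S : Set (SdGroup d)) = ⊤) :
    conjClass (⟨1, fun i : Fin d => if (i : ℕ) < c then (-1 : ℤˣ) else 1⟩ : SdGroup d) =
      {g : SdGroup d |
        (∀ i : Fin d, (i : ℕ) < c → (2 : ℤ) ∣ Multiplicative.toAdd g.left i) ∧
        (∀ i : Fin d, c ≤ (i : ℕ) → Multiplicative.toAdd g.left i = 0) ∧
        g.right = fun i : Fin d => if (i : ℕ) < c then (-1 : ℤˣ) else 1} ∧
    GrowthEquiv
      (growth (S : Set (SdGroup d))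
        (conjClass (⟨1, fun i : Fin d => if (i : ℕ) < c then (-1 : ℤˣ) else 1⟩ : SdGroup d)))
      (fun n => n ^ c) := by
  open SdGroup in
  obtain ⟨K, -, hSgens⟩ :=
    exists_growth_le_growth_mul S.finite_toSet hS finite_gens closure_gens
  obtain ⟨L, hL, hgensS⟩ :=
    exists_growth_le_growth_mul finite_gens closure_gens S.finite_toSet hS
  set U := conjClass (⟨1, signFlip d c⟩ : SdGroup d)
  refine ⟨conjClass_signFlip c, Dominates.of_le_comp (l := 2 * K + 1) (by omega) fun n => ?_,
    Dominates.of_le_comp (l := L * (2 * d + 1)) (Nat.mul_pos hL (by omega)) fun n => ?_⟩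
  · calc growth S U n ≤ growth (gens d) U (K * n) := hSgens U n
      _ ≤ (2 * (K * n) + 1) ^ c := growth_conjClass_signFlip_le hc _
      _ ≤ ((2 * K + 1) * n + (2 * K + 1)) ^ c := Nat.pow_le_pow_left (by nlinarith) c
  · calc n ^ c ≤ growth (gens d) U ((2 * d + 1) * n + (2 * d + 1)) :=
          pow_le_growth_conjClass_signFlip hc n
      _ ≤ growth S U (L * ((2 * d + 1) * n + (2 * d + 1))) := hgensS U _
      _ = growth S U (L * (2 * d + 1) * n + L * (2 * d + 1)) := by ring_nf
end
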